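/- Let ι be an index set, let Σ be the subgroup of countably supported elements of 𝕋^ι, let c ∈ 𝕋^ι, and let U be an open neighborhood of the identity in 𝕋^ι. Then the closure of the set O_U = ⋃_{n∈ℕ} ((cⁿU ∩ Σ) × {n}) in the product space 𝕋^ι × ℤ (product topology on 𝕋^ι, discrete topology on ℤ) equals ⋃_{n∈ℕ} (cⁿ·cl(U)) × {n}, where cl(U) is the closure of U in 𝕋^ι. -/

import Mathlib

/-- The subgroup `Σ` of countably supported elements of the product group `𝕋^ι`,
where `𝕋 = Circle` is the circle group. -/
noncomputable def SigmaSubgroup (ι : Type*) : Subgroup (ι → Circle) where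
  carrier := {x | {i | x i ≠ 1}.Countable}
  one_mem' := by simp
  mul_mem' := by
    intro a b ha hb
    refine (ha.union hb).mono ?_
    intro i hi
    by_contra h
    simp only [Set.mem_union, Set.mem_setOf_eq, not_or, not_not] at h
    exact hi (by simp [Pi.mul_apply, h.1, h.2])
  inv_mem' := by
    intro a ha
    refine ha.mono ?_
    intro i hi
    simp only [Set.mem_setOf_eq, Pi.inv_apply, ne_eq, inv_eq_one] at hi ⊢
    exact hi

/-- For `c ∈ 𝕋^ι` and `U ⊆ 𝕋^ι`, the set `O_U = ⋃_{n ∈ ℕ} ((cⁿU ∩ Σ) × {n})`, regarded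
as a subset of the ambient product `𝕋^ι × ℤ` (`ℕ` is identified with
`{0, 1, 2, …} ⊆ ℤ`). -/
def OSetAmbient {ι : Type*} (c : ι → Circle) (U : Set (ι → Circle)) :
    Set ((ι → Circle) × ℤ) :=
  {p | ∃ n : ℕ, p.2 = (n : ℤ) ∧ p.1 ∈ SigmaSubgroup ι ∧ ∃ u ∈ U, p.1 = c ^ n * u}


/-!
A point `(x, k)` of `𝕋^ι × ℤ` lies in the closure of a set exactly when `x` lies in the closure
of the slice at height `k`, because `ℤ` is discrete. The slice of `O_U` at height `n ≥ 0` is the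
open set `cⁿU` intersected with `Σ`, and `Σ` is dense (it contains the finitely supported
elements), so its closure is `cl(cⁿU) = cⁿ cl(U)`; at negative heights the slice is empty.
-/

open Set Filter Topology Pointwise

theorem mem_closure_prod_discrete_iff {X D : Type*} [TopologicalSpace X] [TopologicalSpace D]
    [DiscreteTopology D] {s : Set (X × D)} {x : X} {d : D} :
    (x, d) ∈ closure s ↔ x ∈ closure ((·, d) ⁻¹' s) := by
  simp only [mem_closure_iff_clusterPt, ClusterPt, nhds_prod_eq, nhds_discrete,
    Filter.prod_pure, ← Filter.map_inf_principal_preimage, Filter.map_neBot_iff]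

theorem Dense.closure_inter_of_isOpen {X : Type*} [TopologicalSpace X] {s t : Set X}
    (hs : Dense s) (ht : IsOpen t) : closure (t ∩ s) = closure t :=
  (closure_mono inter_subset_left).antisymm
    (closure_minimal (hs.open_subset_closure_inter ht) isClosed_closure)

theorem dense_setOf_finite_ne {ι : Type*} {X : ι → Type*} [∀ i, TopologicalSpace (X i)]
    (x₀ : ∀ i, X i) : Dense {x : ∀ i, X i | {i | x i ≠ x₀ i}.Finite} := by
  classical
  refine fun x ↦ mem_closure_iff.2 fun V hV hxV ↦ ?_
  obtain ⟨I, u, hu, hIu⟩ := isOpen_pi_iff.1 hV x hxV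
  refine ⟨I.piecewise x x₀, hIu fun i hi ↦ ?_, I.finite_toSet.subset fun i hi ↦ ?_⟩
  · simpa [Finset.piecewise_eq_of_mem _ _ _ (Finset.mem_coe.1 hi)] using (hu i hi).2
  · by_contra h
    exact hi (Finset.piecewise_eq_of_notMem _ _ _ h)

theorem SigmaSubgroup.dense (ι : Type*) : Dense (SigmaSubgroup ι : Set (ι → Circle)) :=
  (dense_setOf_finite_ne 1).mono fun _ hx ↦ Set.Finite.countable hx

theorem closure_smul_inter_SigmaSubgroup {ι : Type*} (c : ι → Circle) {U : Set (ι → Circle)}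
    (hU : IsOpen U) : closure (c • U ∩ SigmaSubgroup ι) = c • closure U := by
  rw [(SigmaSubgroup.dense ι).closure_inter_of_isOpen (hU.smul c), closure_smul]

theorem preimage_mk_natCast_OSetAmbient {ι : Type*} (c : ι → Circle) (U : Set (ι → Circle))
    (n : ℕ) : (·, (n : ℤ)) ⁻¹' OSetAmbient c U = c ^ n • U ∩ SigmaSubgroup ι := by
  ext x
  simp [OSetAmbient, mem_smul_set, eq_comm, and_comm]

theorem closure_of_OSet_in_ambient_product_general
    (ι : Type u) (c : ι → Circle) (U : Set (ι → Circle))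
    (hU : IsOpen U) :
    @closure ((ι → Circle) × ℤ)
        (TopologicalSpace.induced (Prod.fst : (ι → Circle) × ℤ → ι → Circle)
            inferInstance ⊓
          TopologicalSpace.induced (Prod.snd : (ι → Circle) × ℤ → ℤ)
            (⊥ : TopologicalSpace ℤ))
        (OSetAmbient c U) =
      {p : (ι → Circle) × ℤ | ∃ n : ℕ, p.2 = (n : ℤ) ∧
        ∃ u ∈ closure U, p.1 = c ^ n * u} := by
  -- the given topology is the product topology, since the topology of `ℤ` is `⊥` by definition
  change closure (OSetAmbient c U) = _
  ext ⟨x, k⟩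
  rw [mem_closure_prod_discrete_iff]
  cases k with
  | ofNat n =>
    rw [Int.ofNat_eq_natCast, preimage_mk_natCast_OSetAmbient,
      closure_smul_inter_SigmaSubgroup _ hU]
    simp [mem_smul_set, eq_comm]
  | negSucc m =>
    simp [OSetAmbient]

/-- Let `ι` be an index set, `Σ ≤ 𝕋^ι` the subgroup of countably supported elements,
`c ∈ 𝕋^ι` and `U` an open neighborhood of the identity of `𝕋^ι`.  Then the closure of
`O_U = ⋃_{n ∈ ℕ} ((cⁿU ∩ Σ) × {n})` in the product space `𝕋^ι × ℤ` (product topology on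
`𝕋^ι`, discrete topology on `ℤ`) equals `⋃_{n ∈ ℕ} (cⁿ · cl U) × {n}`, where `cl U` is the
closure of `U` in `𝕋^ι`. -/
theorem closure_of_OSet_in_ambient_product
    (ι : Type u) (c : ι → Circle) (U : Set (ι → Circle))
    (hU : IsOpen U) (h1U : (1 : ι → Circle) ∈ U) :
    @closure ((ι → Circle) × ℤ)
        (TopologicalSpace.induced (Prod.fst : (ι → Circle) × ℤ → ι → Circle)
            inferInstance ⊓
          TopologicalSpace.induced (Prod.snd : (ι → Circle) × ℤ → ℤ)
            (⊥ : TopologicalSpace ℤ))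
        (OSetAmbient c U) =
      {p : (ι → Circle) × ℤ | ∃ n : ℕ, p.2 = (n : ℤ) ∧
        ∃ u ∈ closure U, p.1 = c ^ n * u} :=
  closure_of_OSet_in_ambient_product_general ι c U hU
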